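/- arXiv:2511.03548 — 4 statements merged into one kernel-verified Lean document; each statement's English description precedes it below -/
import Mathlib

section
/- Let f : ℝ^d → ℝ be nonnegative, convex, β-smooth, and suppose there exists w* with f(w* + u) = 0 for all ‖u‖ ≤ ρ. Let a sequence satisfy w_{t+1} = w_t − η∇f(w_t + v_t) with ‖v_t‖ ≤ r for all t and η ≤ 1/(4β). Then (1/T)·Σ_{t=1}^T f(w_t + v_t) ≤ ‖w_1 − w*‖²/(ηT) + 4β·max(r − ρ, 0)². -/
/-! The squared distance to the flat minimum `w*` decreases along the iteration up to an error.
At the perturbed point `x = w + v`, convexity against the point `w* + u` of the flat ball closest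
to `w* + v` gives `⟪∇f x, w - w*⟫ ≥ f x - ‖∇f x‖ · max (r - ρ) 0`. For a nonnegative `β`-smooth
function `‖∇f x‖² ≤ 2β f x`; with `η ≤ 1/(4β)` this absorbs both the `η²‖∇f x‖²` term and, by
AM-GM, the perturbation term, so that
`‖w_{t+1} - w*‖² ≤ ‖w_t - w*‖² - η f (w_t + v_t) + 4βη max (r - ρ) 0 ²`, which telescopes. -/

open RealInnerProductSpace Gradient

section Gradient

variable {F : Type*} [NormedAddCommGroup F] [InnerProductSpace ℝ F] [CompleteSpace F]
  {f : F → ℝ} {x y g : F}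

lemma HasGradientAt.hasDerivAt_comp_lineMap {t : ℝ}
    (hf : HasGradientAt f g (AffineMap.lineMap x y t)) :
    HasDerivAt (f ∘ AffineMap.lineMap x y) ⟪g, y - x⟫ t := by
  simpa using hf.hasFDerivAt.comp_hasDerivAt t AffineMap.hasDerivAt_lineMap

lemma ConvexOn.add_inner_le_of_hasGradientAt {s : Set F} (hconv : ConvexOn ℝ s f) (hx : x ∈ s)
    (hy : y ∈ s) (hf : HasGradientAt f g x) : f x + ⟪g, y - x⟫ ≤ f y := by
  have hline : ConvexOn ℝ (Set.Icc (0 : ℝ) 1) (f ∘ AffineMap.lineMap x y) :=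
    (hconv.comp_affineMap (AffineMap.lineMap x y)).subset
      (fun _ ht ↦ hconv.1.lineMap_mem hx hy ht) (convex_Icc 0 1)
  have hderiv := ((AffineMap.lineMap_apply_zero (k := ℝ) x y).symm ▸ hf).hasDerivAt_comp_lineMap
  have := hline.le_slope_of_hasDerivAt (by simp) (by simp) one_pos hderiv
  simp only [slope, sub_zero, inv_one, Function.comp_apply, AffineMap.lineMap_apply_one,
    AffineMap.lineMap_apply_zero, vsub_eq_sub, smul_eq_mul, one_mul] at this
  linarith

lemma le_add_inner_gradient_add_sq_of_lipschitz_gradient {β : ℝ} (hdiff : Differentiable ℝ f)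
    (hsmooth : ∀ x y, ‖∇ f x - ∇ f y‖ ≤ β * ‖x - y‖) (x y : F) :
    f y ≤ f x + ⟪∇ f x, y - x⟫ + β / 2 * ‖y - x‖ ^ 2 := by
  set φ : ℝ → ℝ := fun t ↦
    (f ∘ AffineMap.lineMap x y) t - t * ⟪∇ f x, y - x⟫ - β / 2 * t ^ 2 * ‖y - x‖ ^ 2
  have hφ : ∀ t, HasDerivAt φ
      (⟪∇ f (AffineMap.lineMap x y t), y - x⟫ - ⟪∇ f x, y - x⟫ - β * t * ‖y - x‖ ^ 2) t := by
    intro t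
    have := (((hdiff _).hasGradientAt.hasDerivAt_comp_lineMap (x := x) (y := y) (t := t)).sub
      (hasDerivAt_mul_const ⟪∇ f x, y - x⟫)).sub
      (((hasDerivAt_pow 2 t).const_mul (β / 2)).mul_const (‖y - x‖ ^ 2))
    exact this.congr_deriv (by ring)
  have hanti : AntitoneOn φ (Set.Icc 0 1) := by
    refine antitoneOn_of_hasDerivWithinAt_nonpos (convex_Icc 0 1)
      (fun t _ ↦ (hφ t).continuousAt.continuousWithinAt) (fun t _ ↦ (hφ t).hasDerivWithinAt) ?_
    intro t ht
    rw [interior_Icc] at ht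
    have hlip : ⟪∇ f (AffineMap.lineMap x y t) - ∇ f x, y - x⟫ ≤ β * t * ‖y - x‖ ^ 2 :=
      calc _ ≤ ‖∇ f (AffineMap.lineMap x y t) - ∇ f x‖ * ‖y - x‖ := real_inner_le_norm _ _
        _ ≤ β * ‖AffineMap.lineMap x y t - x‖ * ‖y - x‖ := by gcongr; exact hsmooth _ _
        _ = β * t * ‖y - x‖ ^ 2 := by
          rw [← vsub_eq_sub, AffineMap.lineMap_vsub_left, norm_smul, Real.norm_of_nonneg ht.1.le,
            vsub_eq_sub]
          ring
    rw [inner_sub_left] at hlip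
    linarith
  have := hanti (by simp) (by simp) zero_le_one
  simp only [φ, Function.comp_apply, AffineMap.lineMap_apply_zero,
    AffineMap.lineMap_apply_one] at this
  linarith

lemma sq_norm_gradient_le_of_nonneg {β : ℝ} (hβ : 0 < β) (hnonneg : ∀ x, 0 ≤ f x)
    (hdiff : Differentiable ℝ f) (hsmooth : ∀ x y, ‖∇ f x - ∇ f y‖ ≤ β * ‖x - y‖) (x : F) :
    ‖∇ f x‖ ^ 2 ≤ 2 * β * f x := by
  have hdescent := le_add_inner_gradient_add_sq_of_lipschitz_gradient hdiff hsmooth x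
    (x - β⁻¹ • ∇ f x)
  rw [sub_sub_cancel_left, inner_neg_right, real_inner_smul_right, real_inner_self_eq_norm_sq,
    norm_neg, norm_smul, Real.norm_of_nonneg (inv_nonneg.2 hβ.le)] at hdescent
  have hval : β⁻¹ * ‖∇ f x‖ ^ 2 - β / 2 * (β⁻¹ * ‖∇ f x‖) ^ 2 = ‖∇ f x‖ ^ 2 / (2 * β) := by
    field_simp; ring
  have hnext := hnonneg (x - β⁻¹ • ∇ f x)
  have : ‖∇ f x‖ ^ 2 / (2 * β) ≤ f x := by linarith
  rwa [div_le_iff₀ (by positivity), mul_comm] at this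

lemma sq_norm_perturbed_gradient_step_sub_le {β η δ : ℝ} (hβ : 0 < β) (hη : 0 ≤ η)
    (hη' : η ≤ 1 / (4 * β)) (hnonneg : ∀ x, 0 ≤ f x) (hconv : ConvexOn ℝ Set.univ f)
    (hdiff : Differentiable ℝ f) (hsmooth : ∀ x y, ‖∇ f x - ∇ f y‖ ≤ β * ‖x - y‖)
    {w v wstar u : F} (hu : f (wstar + u) = 0) (hvu : ‖v - u‖ ≤ δ) :
    ‖w - η • ∇ f (w + v) - wstar‖ ^ 2 ≤ ‖w - wstar‖ ^ 2 - η * f (w + v) + 4 * β * η * δ ^ 2 := by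
  set g := ∇ f (w + v)
  have hinner : f (w + v) - ‖g‖ * δ ≤ ⟪g, w - wstar⟫ := by
    have hfirst := hconv.add_inner_le_of_hasGradientAt (Set.mem_univ (w + v))
      (Set.mem_univ (wstar + u)) (hdiff (w + v)).hasGradientAt
    have hcs : ⟪g, v - u⟫ ≤ ‖g‖ * δ :=
      (real_inner_le_norm g (v - u)).trans (mul_le_mul_of_nonneg_left hvu (norm_nonneg g))
    rw [hu, show wstar + u - (w + v) = -(w - wstar) - (v - u) by abel, inner_sub_right,
      inner_neg_right] at hfirst
    linarith
  have hexpand : ‖w - η • g - wstar‖ ^ 2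
      = ‖w - wstar‖ ^ 2 - 2 * η * ⟪g, w - wstar⟫ + η ^ 2 * ‖g‖ ^ 2 := by
    rw [show w - η • g - wstar = (w - wstar) - η • g by abel, norm_sub_sq_real,
      real_inner_smul_right, real_inner_comm, norm_smul, Real.norm_of_nonneg hη]
    ring
  have hgrad := sq_norm_gradient_le_of_nonneg hβ hnonneg hdiff hsmooth (w + v)
  have hkey : 2 * ‖g‖ * δ + η * ‖g‖ ^ 2 ≤ f (w + v) + 4 * β * δ ^ 2 := by
    have h4βη : 4 * β * η ≤ 1 := by rwa [le_div_iff₀ (by positivity), mul_comm] at hη'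
    nlinarith [sq_nonneg (‖g‖ - 4 * β * δ), mul_le_mul_of_nonneg_right h4βη (sq_nonneg ‖g‖)]
  calc ‖w - η • g - wstar‖ ^ 2
      ≤ ‖w - wstar‖ ^ 2 - 2 * η * (f (w + v) - ‖g‖ * δ) + η ^ 2 * ‖g‖ ^ 2 := by
        rw [hexpand]; gcongr
    _ = ‖w - wstar‖ ^ 2 - η * f (w + v) + η * (2 * ‖g‖ * δ + η * ‖g‖ ^ 2 - f (w + v)) := by ring
    _ ≤ ‖w - wstar‖ ^ 2 - η * f (w + v) + 4 * β * η * δ ^ 2 := by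
        linarith [mul_le_mul_of_nonneg_left hkey hη]

end Gradient

lemma exists_norm_le_and_norm_sub_le {E : Type*} [NormedAddCommGroup E] [NormedSpace ℝ E]
    {ρ : ℝ} (hρ : 0 ≤ ρ) (v : E) : ∃ u : E, ‖u‖ ≤ ρ ∧ ‖v - u‖ ≤ max (‖v‖ - ρ) 0 := by
  rcases le_or_gt ‖v‖ ρ with hv | hv
  · exact ⟨v, hv, by simp⟩
  · have hv₀ : 0 < ‖v‖ := hρ.trans_lt hv
    refine ⟨(ρ / ‖v‖) • v, ?_, le_max_of_le_left (le_of_eq ?_)⟩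
    · rw [norm_smul, Real.norm_of_nonneg (by positivity), div_mul_cancel₀ _ hv₀.ne']
    · have hcoef : ρ / ‖v‖ ≤ 1 := (div_le_one hv₀).2 hv.le
      rw [show v - (ρ / ‖v‖) • v = (1 - ρ / ‖v‖) • v by rw [sub_smul, one_smul], norm_smul,
        Real.norm_of_nonneg (sub_nonneg.2 hcoef), sub_mul, one_mul, div_mul_cancel₀ _ hv₀.ne']

lemma sum_Icc_add_le_of_le_sub_add {a b : ℕ → ℝ} {c : ℝ} (h : ∀ t, a (t + 1) ≤ a t - b t + c)
    (T : ℕ) : a (T + 1) + ∑ t ∈ Finset.Icc 1 T, b t ≤ a 1 + T * c := by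
  induction T with
  | zero => simp
  | succ n ih =>
    rw [Finset.sum_Icc_succ_top (Nat.le_add_left 1 n)]
    push_cast
    linarith [h (n + 1)]

theorem stmt_9_general (d : ℕ) (β ρ r η : ℝ) (hβ : 0 < β) (hρ : 0 ≤ ρ)
    (hη : 0 < η) (hη' : η ≤ 1 / (4 * β))
    (f : EuclideanSpace ℝ (Fin d) → ℝ)
    (hnonneg : ∀ w, 0 ≤ f w) (hconv : ConvexOn ℝ Set.univ f) (hdiff : Differentiable ℝ f)
    (hsmooth : ∀ x y, ‖gradient f x - gradient f y‖ ≤ β * ‖x - y‖)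
    (wstar : EuclideanSpace ℝ (Fin d)) (hflat : ∀ u, ‖u‖ ≤ ρ → f (wstar + u) = 0)
    (T : ℕ) (w v : ℕ → EuclideanSpace ℝ (Fin d))
    (hv : ∀ t, ‖v t‖ ≤ r)
    (hupd : ∀ t, w (t + 1) = w t - η • gradient f (w t + v t)) :
    (1 / (T : ℝ)) * ∑ t ∈ Finset.Icc 1 T, f (w t + v t)
      ≤ ‖w 1 - wstar‖ ^ 2 / (η * T) + 4 * β * max (r - ρ) 0 ^ 2 := by
  set δ := max (r - ρ) 0
  have hstep (t : ℕ) :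
      ‖w (t + 1) - wstar‖ ^ 2 ≤ ‖w t - wstar‖ ^ 2 - η * f (w t + v t) + 4 * β * η * δ ^ 2 := by
    obtain ⟨u, hu, hvu⟩ := exists_norm_le_and_norm_sub_le hρ (v t)
    rw [hupd t]
    exact sq_norm_perturbed_gradient_step_sub_le hβ hη.le hη' hnonneg hconv hdiff hsmooth
      (hflat u hu) (hvu.trans (max_le_max_right 0 (by linarith [hv t])))
  have hsum := sum_Icc_add_le_of_le_sub_add (a := fun t ↦ ‖w t - wstar‖ ^ 2)
    (b := fun t ↦ η * f (w t + v t)) hstep T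
  rcases T.eq_zero_or_pos with rfl | hT
  · simp only [Nat.cast_zero, div_zero, zero_mul, mul_zero, zero_add]
    positivity
  · rw [← Finset.mul_sum] at hsum
    have hηT : 0 < η * T := by positivity
    rw [← mul_le_mul_iff_right₀ hηT]
    field_simp
    linarith [sq_nonneg ‖w (T + 1) - wstar‖]

/-- Regret lemma: if `f` is nonnegative, convex, `β`-smooth and vanishes on the ball of
radius `ρ` around `w*`, and `w_{t+1} = w_t - η∇f(w_t + v_t)` with `‖v_t‖ ≤ r` and
`η ≤ 1/(4β)`, then `(1/T)·Σ_{t=1}^T f(w_t + v_t) ≤ ‖w₁ - w*‖²/(ηT) + 4β·max(r-ρ,0)²`. -/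
theorem stmt_9 (d : ℕ) (β ρ r η : ℝ) (hβ : 0 < β) (hρ : 0 ≤ ρ) (hr : 0 ≤ r)
    (hη : 0 < η) (hη' : η ≤ 1 / (4 * β))
    (f : EuclideanSpace ℝ (Fin d) → ℝ)
    (hnonneg : ∀ w, 0 ≤ f w) (hconv : ConvexOn ℝ Set.univ f) (hdiff : Differentiable ℝ f)
    (hsmooth : ∀ x y, ‖gradient f x - gradient f y‖ ≤ β * ‖x - y‖)
    (wstar : EuclideanSpace ℝ (Fin d)) (hflat : ∀ u, ‖u‖ ≤ ρ → f (wstar + u) = 0)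
    (T : ℕ) (hT : 1 ≤ T) (w v : ℕ → EuclideanSpace ℝ (Fin d))
    (hv : ∀ t, ‖v t‖ ≤ r)
    (hupd : ∀ t, w (t + 1) = w t - η • gradient f (w t + v t)) :
    (1 / (T : ℝ)) * ∑ t ∈ Finset.Icc 1 T, f (w t + v t)
      ≤ ‖w 1 - wstar‖ ^ 2 / (η * T) + 4 * β * max (r - ρ) 0 ^ 2 :=
  stmt_9_general d β ρ r η hβ hρ hη hη' f hnonneg hconv hdiff hsmooth wstar hflat T w v hv hupd
end

section
/- Under the assumptions of the general regret lemma (f nonnegative convex β-smooth with a ρ-flat minimum w*, updates w_{t+1} = w_t − η∇f(w_t + v_t) with v_t ∈ argmax_{‖v‖≤r} f(w_t + v), η ≤ 1/(4β)), the averaged iterate ŵ = (1/T)Σ w_t satisfies max_{‖v‖≤r} f(ŵ + v) ≤ ‖w_1 − w*‖²/(ηT) + 4β·max(r − ρ, 0)². -/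
/-!
Per step, convexity at `x = w + v` against the point of the flat ball nearest to `w* + v`
gives `f x ≤ ⟪∇f x, w - w*⟫ + ‖∇f x‖ · max(r - ρ, 0)`, while smoothness and `f ≥ 0` give
`‖∇f x‖² ≤ 2β f x`. Expanding `‖w - η∇f x - w*‖²` and using `4βη ≤ 1` then turns the
gradient step into `η f(w_t + v_t) ≤ ‖w_t - w*‖² - ‖w_{t+1} - w*‖² + 4ηβ max(r - ρ, 0)²`,
which telescopes. Since `v_t` is a worst perturbation and `f(· + u)` is convex, Jensen's
inequality bounds `f(ŵ + u)` by the average of `f(w_t + v_t)`.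
-/

open Finset RealInnerProductSpace
open scoped Gradient

theorem Finset.sum_Icc_le_sub_add_nsmul {R : Type*} [AddCommGroup R] [PartialOrder R]
    [IsOrderedAddMonoid R] {a D : ℕ → R} {c : R} (h : ∀ t, a t ≤ D t - D (t + 1) + c) (T : ℕ) :
    ∑ t ∈ Icc 1 T, a t ≤ D 1 - D (T + 1) + T • c := by
  induction T with
  | zero => simp
  | succ n ih =>
    rw [sum_Icc_succ_top (Nat.le_add_left 1 n), succ_nsmul]
    calc ∑ t ∈ Icc 1 n, a t + a (n + 1)
        ≤ (D 1 - D (n + 1) + n • c) + (D (n + 1) - D (n + 1 + 1) + c) := add_le_add ih (h _)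
      _ = D 1 - D (n + 1 + 1) + (n • c + c) := by abel

theorem ConvexOn.map_inv_card_smul_sum_le {ι E : Type*} [AddCommGroup E] [Module ℝ E]
    {s : Set E} {f : E → ℝ} (hf : ConvexOn ℝ s f) {t : Finset ι} (ht : t.Nonempty) {p : ι → E}
    (hp : ∀ i ∈ t, p i ∈ s) :
    f ((#t : ℝ)⁻¹ • ∑ i ∈ t, p i) ≤ (#t : ℝ)⁻¹ * ∑ i ∈ t, f (p i) := by
  have hcard : (0 : ℝ) < #t := by exact_mod_cast ht.card_pos
  have := hf.map_sum_le (t := t) (w := fun _ => (#t : ℝ)⁻¹) (p := p) (fun _ _ => by positivity)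
    (by simp [hcard.ne']) hp
  simpa only [← smul_sum, ← mul_sum, smul_eq_mul] using this

theorem exists_norm_le_norm_sub_le {E : Type*} [NormedAddCommGroup E] [NormedSpace ℝ E]
    {ρ : ℝ} (hρ : 0 ≤ ρ) (v : E) : ∃ v', ‖v'‖ ≤ ρ ∧ ‖v - v'‖ ≤ max (‖v‖ - ρ) 0 := by
  rcases le_or_gt ‖v‖ ρ with hle | hlt
  · exact ⟨v, hle, by simp⟩
  have hv : 0 < ‖v‖ := hρ.trans_lt hlt
  refine ⟨(ρ / ‖v‖) • v, ?_, le_max_of_le_left ?_⟩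
  · rw [norm_smul, Real.norm_of_nonneg (by positivity), div_mul_cancel₀ _ hv.ne']
  · have hsub : v - (ρ / ‖v‖) • v = (1 - ρ / ‖v‖) • v := by rw [sub_smul, one_smul]
    have hρv : ρ / ‖v‖ ≤ 1 := (div_le_one hv).2 hlt.le
    rw [hsub, norm_smul, Real.norm_of_nonneg (by linarith), sub_mul, div_mul_cancel₀ _ hv.ne',
      one_mul]

section Gradient

variable {E : Type*} [NormedAddCommGroup E] [InnerProductSpace ℝ E] [CompleteSpace E]
  {f : E → ℝ} {β ρ r η : ℝ} {wstar : E}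

theorem hasDerivAt_comp_add_smul {x v : E} {t : ℝ} (hf : DifferentiableAt ℝ f (x + t • v)) :
    HasDerivAt (fun s : ℝ => f (x + s • v)) ⟪∇ f (x + t • v), v⟫ t := by
  have hline : HasDerivAt (fun s : ℝ => x + s • v) v t := by
    simpa using ((hasDerivAt_id t).smul_const v).const_add x
  simpa only [Function.comp_def, InnerProductSpace.toDual_apply_apply] using
    (hasGradientAt_iff_hasFDerivAt.mp hf.hasGradientAt).comp_hasDerivAt t hline

theorem ConvexOn.add_inner_gradient_le (hconv : ConvexOn ℝ Set.univ f) {x : E}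
    (hf : DifferentiableAt ℝ f x) (y : E) : f x + ⟪∇ f x, y - x⟫ ≤ f y := by
  have hline : ConvexOn ℝ Set.univ (fun t : ℝ => f (x + t • (y - x))) := by
    simpa [Function.comp_def, AffineMap.lineMap_apply, add_comm] using
      hconv.comp_affineMap (AffineMap.lineMap x y : ℝ →ᵃ[ℝ] E)
  have hderiv : HasDerivAt (fun t : ℝ => f (x + t • (y - x))) ⟪∇ f x, y - x⟫ 0 := by
    simpa using hasDerivAt_comp_add_smul (v := y - x) (t := 0) (by simpa using hf)
  have := hline.le_slope_of_hasDerivAt (Set.mem_univ 0) (Set.mem_univ 1) one_pos hderiv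
  simp only [slope_def_field, one_smul, zero_smul, add_zero, add_sub_cancel, sub_zero,
    div_one] at this
  linarith

theorem le_add_inner_gradient_add_sq (hdiff : Differentiable ℝ f)
    (hsmooth : ∀ a b, ‖∇ f a - ∇ f b‖ ≤ β * ‖a - b‖) (x v : E) :
    f (x + v) ≤ f x + ⟪∇ f x, v⟫ + β / 2 * ‖v‖ ^ 2 := by
  set ψ : ℝ → ℝ := fun t => f (x + t • v) - t * ⟪∇ f x, v⟫ - β / 2 * t ^ 2 * ‖v‖ ^ 2
  have hψ : ∀ t : ℝ, HasDerivAt ψ (⟪∇ f (x + t • v) - ∇ f x, v⟫ - β * t * ‖v‖ ^ 2) t := by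
    intro t
    have hquad := ((hasDerivAt_pow 2 t).const_mul (β / 2)).mul_const (‖v‖ ^ 2)
    refine (((hasDerivAt_comp_add_smul (hdiff _)).sub
      ((hasDerivAt_id t).mul_const ⟪∇ f x, v⟫)).sub hquad).congr_deriv ?_
    rw [inner_sub_left]
    push_cast
    ring
  have hanti : AntitoneOn ψ (Set.Icc 0 1) := by
    refine antitoneOn_of_hasDerivWithinAt_nonpos (convex_Icc 0 1)
      (fun t _ => (hψ t).continuousAt.continuousWithinAt)
      (fun t _ => (hψ t).hasDerivWithinAt) fun t ht => ?_
    rw [interior_Icc] at ht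
    have hlip : ⟪∇ f (x + t • v) - ∇ f x, v⟫ ≤ β * t * ‖v‖ ^ 2 :=
      calc ⟪∇ f (x + t • v) - ∇ f x, v⟫
          ≤ ‖∇ f (x + t • v) - ∇ f x‖ * ‖v‖ := real_inner_le_norm _ _
        _ ≤ β * ‖(x + t • v) - x‖ * ‖v‖ := by gcongr; exact hsmooth _ _
        _ = β * t * ‖v‖ ^ 2 := by
          rw [add_sub_cancel_left, norm_smul, Real.norm_of_nonneg ht.1.le]; ring
    linarith
  have := hanti (Set.left_mem_Icc.2 zero_le_one) (Set.right_mem_Icc.2 zero_le_one) zero_le_one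
  simp only [ψ, one_smul, zero_smul, add_zero, one_mul, zero_mul, one_pow, sub_zero,
    mul_one, ne_eq, OfNat.ofNat_ne_zero, not_false_eq_true, zero_pow, mul_zero] at this
  linarith

theorem norm_gradient_sq_le (hβ : 0 < β) (hnonneg : ∀ x, 0 ≤ f x) (hdiff : Differentiable ℝ f)
    (hsmooth : ∀ a b, ‖∇ f a - ∇ f b‖ ≤ β * ‖a - b‖) (x : E) :
    ‖∇ f x‖ ^ 2 ≤ 2 * β * f x := by
  -- one descent step of length `1/β` cannot go below `0`
  have hstep := le_add_inner_gradient_add_sq hdiff hsmooth x (-(β⁻¹ • ∇ f x))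
  rw [inner_neg_right, real_inner_smul_right, real_inner_self_eq_norm_sq, norm_neg, norm_smul,
    Real.norm_of_nonneg (inv_nonneg.2 hβ.le)] at hstep
  rw [← div_le_iff₀' (by positivity)]
  calc ‖∇ f x‖ ^ 2 / (2 * β)
      = f x - (f x + -(β⁻¹ * ‖∇ f x‖ ^ 2) + β / 2 * (β⁻¹ * ‖∇ f x‖) ^ 2) := by
        field_simp; ring
    _ ≤ f x := by linarith [hnonneg (x + -(β⁻¹ • ∇ f x))]

theorem ConvexOn.le_inner_gradient_add_of_flat (hconv : ConvexOn ℝ Set.univ f) {w v : E}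
    (hdiff : DifferentiableAt ℝ f (w + v)) (hρ : 0 ≤ ρ)
    (hflat : ∀ u, ‖u‖ ≤ ρ → f (wstar + u) = 0) (hv : ‖v‖ ≤ r) :
    f (w + v) ≤ ⟪∇ f (w + v), w - wstar⟫ + ‖∇ f (w + v)‖ * max (r - ρ) 0 := by
  obtain ⟨v', hv'ρ, hvv'⟩ := exists_norm_le_norm_sub_le hρ v
  have hconvex := hconv.add_inner_gradient_le hdiff (wstar + v')
  rw [hflat v' hv'ρ, show wstar + v' - (w + v) = -((w - wstar) + (v - v')) by abel,
    inner_neg_right, inner_add_right] at hconvex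
  have hcs : ⟪∇ f (w + v), v - v'⟫ ≤ ‖∇ f (w + v)‖ * max (r - ρ) 0 :=
    (real_inner_le_norm _ _).trans <| by gcongr; exact hvv'.trans (by gcongr)
  linarith

theorem sharpnessAware_step_le (hβ : 0 < β) (hη : 0 ≤ η)
    (hη' : η ≤ 1 / (4 * β)) (hnonneg : ∀ x, 0 ≤ f x) (hconv : ConvexOn ℝ Set.univ f)
    (hdiff : Differentiable ℝ f) (hsmooth : ∀ a b, ‖∇ f a - ∇ f b‖ ≤ β * ‖a - b‖)
    (hρ : 0 ≤ ρ) (hflat : ∀ u, ‖u‖ ≤ ρ → f (wstar + u) = 0) {v : E} (hv : ‖v‖ ≤ r) (w : E) :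
    η * f (w + v) ≤ ‖w - wstar‖ ^ 2 - ‖w - η • ∇ f (w + v) - wstar‖ ^ 2
      + η * (4 * β * max (r - ρ) 0 ^ 2) := by
  set g := ∇ f (w + v)
  set M := max (r - ρ) 0
  have hlow : f (w + v) ≤ ⟪g, w - wstar⟫ + ‖g‖ * M :=
    hconv.le_inner_gradient_add_of_flat (hdiff _) hρ hflat hv
  have hexpand : ‖w - η • g - wstar‖ ^ 2 = ‖w - wstar‖ ^ 2 - 2 * η * ⟪g, w - wstar⟫
      + η ^ 2 * ‖g‖ ^ 2 := by
    rw [show w - η • g - wstar = (w - wstar) - η • g by abel, norm_sub_sq_real,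
      real_inner_smul_right, real_inner_comm, norm_smul, Real.norm_of_nonneg hη]
    ring
  have hgrad : ‖g‖ ^ 2 ≤ 2 * β * f (w + v) := norm_gradient_sq_le hβ hnonneg hdiff hsmooth _
  have hηβ : 4 * β * η ≤ 1 := by rwa [le_div_iff₀' (by positivity)] at hη'
  rw [hexpand]
  -- after multiplying by `4β`, the slack is `η (‖g‖ - 4βM)² + η ‖g‖² (1 - 4βη) ≥ 0`
  nlinarith [mul_nonneg hη (sq_nonneg (‖g‖ - 4 * β * M)),
    mul_nonneg (mul_nonneg hη (sq_nonneg ‖g‖)) (sub_nonneg.2 hηβ),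
    mul_le_mul_of_nonneg_left hgrad hη, mul_le_mul_of_nonneg_left hlow hη]

theorem sharpnessAware_regret_le (hβ : 0 < β) (hη : 0 < η)
    (hη' : η ≤ 1 / (4 * β)) (hnonneg : ∀ x, 0 ≤ f x) (hconv : ConvexOn ℝ Set.univ f)
    (hdiff : Differentiable ℝ f) (hsmooth : ∀ a b, ‖∇ f a - ∇ f b‖ ≤ β * ‖a - b‖)
    (hρ : 0 ≤ ρ) (hflat : ∀ u, ‖u‖ ≤ ρ → f (wstar + u) = 0) {w v : ℕ → E}
    (hv : ∀ t, ‖v t‖ ≤ r) (hupd : ∀ t, w (t + 1) = w t - η • ∇ f (w t + v t)) (T : ℕ) :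
    ∑ t ∈ Icc 1 T, f (w t + v t)
      ≤ ‖w 1 - wstar‖ ^ 2 / η + T * (4 * β * max (r - ρ) 0 ^ 2) := by
  have hregret := sum_Icc_le_sub_add_nsmul (a := fun t => η * f (w t + v t))
    (D := fun t => ‖w t - wstar‖ ^ 2) (fun t => hupd t ▸
      sharpnessAware_step_le hβ hη.le hη' hnonneg hconv hdiff hsmooth hρ
        hflat (hv t) (w t)) T
  rw [← mul_sum, nsmul_eq_mul] at hregret
  rw [div_add' _ _ _ hη.ne', le_div_iff₀ hη]
  linarith [sq_nonneg ‖w (T + 1) - wstar‖]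

end Gradient

theorem stmt_10_general (d : ℕ) (β ρ r η : ℝ) (hβ : 0 < β) (hρ : 0 ≤ ρ)
    (hη : 0 < η) (hη' : η ≤ 1 / (4 * β))
    (f : EuclideanSpace ℝ (Fin d) → ℝ)
    (hnonneg : ∀ w, 0 ≤ f w) (hconv : ConvexOn ℝ Set.univ f) (hdiff : Differentiable ℝ f)
    (hsmooth : ∀ x y, ‖gradient f x - gradient f y‖ ≤ β * ‖x - y‖)
    (wstar : EuclideanSpace ℝ (Fin d)) (hflat : ∀ u, ‖u‖ ≤ ρ → f (wstar + u) = 0)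
    (T : ℕ) (hT : 1 ≤ T) (w v : ℕ → EuclideanSpace ℝ (Fin d))
    (hv : ∀ t, ‖v t‖ ≤ r)
    (hmax : ∀ t, ∀ u : EuclideanSpace ℝ (Fin d), ‖u‖ ≤ r → f (w t + u) ≤ f (w t + v t))
    (hupd : ∀ t, w (t + 1) = w t - η • gradient f (w t + v t)) :
    ∀ u : EuclideanSpace ℝ (Fin d), ‖u‖ ≤ r →
      f (((T : ℝ)⁻¹ • ∑ t ∈ Finset.Icc 1 T, w t) + u)
        ≤ ‖w 1 - wstar‖ ^ 2 / (η * T) + 4 * β * max (r - ρ) 0 ^ 2 := by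
  intro u hu
  have hcard : #(Icc 1 T) = T := by simp
  have hjensen := (hconv.translate_left u).map_inv_card_smul_sum_le
    (nonempty_Icc.2 hT) (p := w) (fun _ _ => Set.mem_univ _)
  rw [hcard] at hjensen
  calc f (((T : ℝ)⁻¹ • ∑ t ∈ Icc 1 T, w t) + u)
      ≤ (T : ℝ)⁻¹ * ∑ t ∈ Icc 1 T, f (w t + u) := hjensen
    _ ≤ (T : ℝ)⁻¹ * ∑ t ∈ Icc 1 T, f (w t + v t) := by
      gcongr with t; exact hmax t u hu
    _ ≤ (T : ℝ)⁻¹ * (‖w 1 - wstar‖ ^ 2 / η + T * (4 * β * max (r - ρ) 0 ^ 2)) := by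
      gcongr
      exact sharpnessAware_regret_le hβ hη hη' hnonneg hconv hdiff hsmooth hρ hflat hv hupd T
    _ = ‖w 1 - wstar‖ ^ 2 / (η * T) + 4 * β * max (r - ρ) 0 ^ 2 := by
      field_simp

/-- SA-GD: under the regret-lemma assumptions, with `v_t` a maximizer of `f(w_t + v)`
over `‖v‖ ≤ r`, the averaged iterate `ŵ = (1/T)Σ w_t` satisfies
`max_{‖v‖≤r} f(ŵ + v) ≤ ‖w₁ - w*‖²/(ηT) + 4β·max(r-ρ,0)²`. -/
theorem stmt_10 (d : ℕ) (β ρ r η : ℝ) (hβ : 0 < β) (hρ : 0 ≤ ρ) (hr : 0 ≤ r)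
    (hη : 0 < η) (hη' : η ≤ 1 / (4 * β))
    (f : EuclideanSpace ℝ (Fin d) → ℝ)
    (hnonneg : ∀ w, 0 ≤ f w) (hconv : ConvexOn ℝ Set.univ f) (hdiff : Differentiable ℝ f)
    (hsmooth : ∀ x y, ‖gradient f x - gradient f y‖ ≤ β * ‖x - y‖)
    (wstar : EuclideanSpace ℝ (Fin d)) (hflat : ∀ u, ‖u‖ ≤ ρ → f (wstar + u) = 0)
    (T : ℕ) (hT : 1 ≤ T) (w v : ℕ → EuclideanSpace ℝ (Fin d))
    (hv : ∀ t, ‖v t‖ ≤ r)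
    (hmax : ∀ t, ∀ u : EuclideanSpace ℝ (Fin d), ‖u‖ ≤ r → f (w t + u) ≤ f (w t + v t))
    (hupd : ∀ t, w (t + 1) = w t - η • gradient f (w t + v t)) :
    ∀ u : EuclideanSpace ℝ (Fin d), ‖u‖ ≤ r →
      f (((T : ℝ)⁻¹ • ∑ t ∈ Finset.Icc 1 T, w t) + u)
        ≤ ‖w 1 - wstar‖ ^ 2 / (η * T) + 4 * β * max (r - ρ) 0 ^ 2 :=
  stmt_10_general d β ρ r η hβ hρ hη hη' f hnonneg hconv hdiff hsmooth wstar hflat T hT w v hv hmax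
    hupd
end

section
/- The function φ_z(w) = (1/2)(max(‖[w ⊙ z]₊‖ − ρ, 0))² has ‖z‖_∞²-Lipschitz gradient: ‖∇φ_z(x) − ∇φ_z(y)‖ ≤ ‖z‖_∞²·‖x − y‖ for all x, y ∈ ℝ^d. -/
/-!
Write `r = [w ⊙ z]₊`. Then `φ_z(w) = ψ(‖r‖²)` with `ψ(t) = ½ max(√t - ρ, 0)²`, and the chain rule
gives `∇φ_z(w) = z ⊙ T(r)`, where `T(v) = v - Π_{B_ρ}(v)` is the residual of the projection onto the
ball; where `r = 0` the gradient vanishes because `0 ≤ φ_z ≤ ‖r‖²`. The residual `T` is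
1-Lipschitz by firm nonexpansiveness of the projection, `[·]₊` is 1-Lipschitz, and multiplication
by `z` is `‖z‖_∞`-Lipschitz; the two multiplications by `z` give the factor `‖z‖_∞²`.
-/

open Filter Topology InnerProductSpace Asymptotics

section Calculus

variable {E : Type*} [NormedAddCommGroup E] [NormedSpace ℝ E]

theorem hasFDerivAt_zero_of_nonneg_of_le {f g : E → ℝ} {x : E} (hf : ∀ y, 0 ≤ f y)
    (hfg : ∀ y, f y ≤ g y) (hgx : g x = 0) (hg : HasFDerivAt g (0 : E →L[ℝ] ℝ) x) :
    HasFDerivAt f (0 : E →L[ℝ] ℝ) x := by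
  have hfx : f x = 0 := le_antisymm (hgx ▸ hfg x) (hf x)
  rw [hasFDerivAt_iff_isLittleO_nhds_zero] at hg ⊢
  refine IsBigO.trans_isLittleO (IsBigO.of_bound 1 (Eventually.of_forall fun h => ?_)) hg
  simp only [hfx, hgx, zero_apply, sub_zero, Real.norm_eq_abs, one_mul]
  exact abs_le_abs_of_nonneg (hf _) (hfg _)

theorem hasDerivAt_max_zero_sq (x : ℝ) :
    HasDerivAt (fun t => max t 0 ^ 2) (2 * max x 0) x := by
  rcases lt_trichotomy x 0 with hx | rfl | hx
  · have h : (fun t : ℝ => max t 0 ^ 2) =ᶠ[𝓝 x] fun _ => 0 := by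
      filter_upwards [Iio_mem_nhds hx] with t (ht : t < 0)
      simp [max_eq_right ht.le]
    simpa [max_eq_right hx.le] using (hasDerivAt_const x (0 : ℝ)).congr_of_eventuallyEq h
  · rw [max_self, mul_zero, hasDerivAt_iff_hasFDerivAt, ContinuousLinearMap.toSpanSingleton_zero]
    refine hasFDerivAt_zero_of_nonneg_of_le (g := fun t => t ^ 2) (fun t => sq_nonneg _)
      (fun t => sq_le_sq.mpr ?_) (by simp) ?_
    · rcases le_total t 0 with ht | ht <;> simp [ht, abs_nonneg]
    · simpa using (hasDerivAt_pow 2 (0 : ℝ)).hasFDerivAt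
  · have h : (fun t : ℝ => max t 0 ^ 2) =ᶠ[𝓝 x] fun t => t ^ 2 := by
      filter_upwards [Ioi_mem_nhds hx] with t (ht : 0 < t)
      simp [max_eq_left ht.le]
    simpa [max_eq_left hx.le] using (hasDerivAt_pow 2 x).congr_of_eventuallyEq h

theorem HasDerivAt.comp_hasGradientAt {F : Type*} [NormedAddCommGroup F]
    [InnerProductSpace ℝ F] [CompleteSpace F] {f : F → ℝ} {g : ℝ → ℝ} {f' : F} {g' : ℝ} {x : F}
    (hg : HasDerivAt g g' (f x)) (hf : HasGradientAt f f' x) :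
    HasGradientAt (g ∘ f) (g' • f') x := by
  rw [hasGradientAt_iff_hasFDerivAt] at hf ⊢
  simpa using hg.comp_hasFDerivAt x hf

end Calculus

section BallResidual

variable {E : Type*} [NormedAddCommGroup E] [InnerProductSpace ℝ E] {ρ : ℝ}

/-- The map `T(v) = v - Π_{B_ρ}(v)`, with `Π_{B_ρ}` the projection onto the closed ball of
radius `ρ` around `0`. -/
noncomputable def ballResidual (ρ : ℝ) (v : E) : E := (max (‖v‖ - ρ) 0 / ‖v‖) • v

theorem ballResidual_of_norm_le {v : E} (h : ‖v‖ ≤ ρ) : ballResidual ρ v = 0 := by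
  simp [ballResidual, max_eq_right (sub_nonpos.mpr h)]

theorem ballResidual_of_lt_norm (hρ : 0 ≤ ρ) {v : E} (h : ρ < ‖v‖) :
    ballResidual ρ v = v - (ρ / ‖v‖) • v := by
  have hv : ‖v‖ ≠ 0 := (hρ.trans_lt h).ne'
  rw [ballResidual, max_eq_left (sub_nonneg.mpr h.le), sub_div, div_self hv, sub_smul, one_smul]

theorem norm_sub_ballResidual_le (hρ : 0 ≤ ρ) (v : E) : ‖v - ballResidual ρ v‖ ≤ ρ := by
  rcases le_or_gt ‖v‖ ρ with h | h
  · simpa [ballResidual_of_norm_le h] using h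
  · rw [ballResidual_of_lt_norm hρ h, sub_sub_cancel, norm_smul,
      Real.norm_of_nonneg (by positivity), div_mul_cancel₀ _ (hρ.trans_lt h).ne']

theorem inner_ballResidual_sub_nonpos (hρ : 0 ≤ ρ) (v : E) {w : E} (hw : ‖w‖ ≤ ρ) :
    ⟪ballResidual ρ v, w - (v - ballResidual ρ v)⟫_ℝ ≤ 0 := by
  rcases le_or_gt ‖v‖ ρ with h | h
  · simp [ballResidual_of_norm_le h]
  have hv : 0 < ‖v‖ := hρ.trans_lt h
  have hc : ρ / ‖v‖ ≤ 1 := (div_le_one hv).mpr h.le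
  have hvw : ⟪v, w⟫_ℝ ≤ ρ * ‖v‖ := by
    nlinarith [real_inner_le_norm v w, norm_nonneg v]
  have hρv : ρ / ‖v‖ * ‖v‖ ^ 2 = ρ * ‖v‖ := by field_simp
  have hT : v - (ρ / ‖v‖) • v = (1 - ρ / ‖v‖) • v := by rw [sub_smul, one_smul]
  rw [ballResidual_of_lt_norm hρ h, sub_sub_cancel, hT, real_inner_smul_left, inner_sub_right,
    real_inner_smul_right, real_inner_self_eq_norm_sq, hρv]
  exact mul_nonpos_of_nonneg_of_nonpos (sub_nonneg.mpr hc) (sub_nonpos.mpr hvw)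

theorem norm_ballResidual_sub_le (hρ : 0 ≤ ρ) (u v : E) :
    ‖ballResidual ρ u - ballResidual ρ v‖ ≤ ‖u - v‖ := by
  set a := ballResidual ρ u
  set b := ballResidual ρ v
  have hu := inner_ballResidual_sub_nonpos hρ u (norm_sub_ballResidual_le hρ v)
  have hv := inner_ballResidual_sub_nonpos hρ v (norm_sub_ballResidual_le hρ u)
  -- firm nonexpansiveness of the projection `v ↦ v - T v`
  have hmono : 0 ≤ ⟪a - b, (u - a) - (v - b)⟫_ℝ := by
    simp only [inner_sub_left, inner_sub_right] at hu hv ⊢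
    linarith
  have hsq : ‖a - b‖ ^ 2 ≤ ‖u - v‖ ^ 2 := by
    rw [show u - v = (a - b) + ((u - a) - (v - b)) by abel, norm_add_sq_real]
    nlinarith [sq_nonneg ‖(u - a) - (v - b)‖]
  exact (pow_le_pow_iff_left₀ (norm_nonneg _) (norm_nonneg _) two_ne_zero).mp hsq

end BallResidual

section Euclidean

variable {ι : Type*}

def hadamard (a b : EuclideanSpace ℝ ι) : EuclideanSpace ℝ ι :=
  WithLp.toLp 2 fun i => a i * b i

infixl:70 " ⊙ " => hadamard

noncomputable def relu (u : EuclideanSpace ℝ ι) : EuclideanSpace ℝ ι :=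
  WithLp.toLp 2 fun i => max (u i) 0

@[simp]
theorem hadamard_apply (a b : EuclideanSpace ℝ ι) (i : ι) : (a ⊙ b) i = a i * b i := rfl

@[simp]
theorem relu_apply (u : EuclideanSpace ℝ ι) (i : ι) : relu u i = max (u i) 0 := rfl

@[simp]
theorem zero_hadamard (b : EuclideanSpace ℝ ι) : 0 ⊙ b = 0 := by
  ext i; simp

theorem sub_hadamard (a b c : EuclideanSpace ℝ ι) : (a - b) ⊙ c = a ⊙ c - b ⊙ c := by
  ext i; simp [sub_mul]

theorem smul_hadamard (r : ℝ) (a b : EuclideanSpace ℝ ι) :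
    (r • a) ⊙ b = r • (a ⊙ b) := by
  ext i; simp [mul_assoc]

variable [Fintype ι]

theorem abs_le_iSup_abs (z : EuclideanSpace ℝ ι) (i : ι) : |z i| ≤ ⨆ j, |z j| :=
  le_ciSup (f := fun j => |z j|) (Set.finite_range _).bddAbove i

theorem norm_hadamard_le (a z : EuclideanSpace ℝ ι) : ‖a ⊙ z‖ ≤ (⨆ i, |z i|) * ‖a‖ := by
  have hM : 0 ≤ ⨆ i, |z i| := Real.iSup_nonneg fun i => abs_nonneg _
  refine (pow_le_pow_iff_left₀ (norm_nonneg _) (by positivity) two_ne_zero).mp ?_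
  rw [mul_pow, EuclideanSpace.real_norm_sq_eq, EuclideanSpace.real_norm_sq_eq, Finset.mul_sum]
  gcongr with i
  have hz : z i ^ 2 ≤ (⨆ j, |z j|) ^ 2 :=
    sq_le_sq.mpr (by simpa [abs_of_nonneg hM] using abs_le_iSup_abs z i)
  rw [hadamard_apply, mul_pow, mul_comm (a i ^ 2)]
  exact mul_le_mul_of_nonneg_right hz (sq_nonneg _)

theorem norm_relu_sub_relu_le (u v : EuclideanSpace ℝ ι) : ‖relu u - relu v‖ ≤ ‖u - v‖ := by
  rw [EuclideanSpace.norm_eq, EuclideanSpace.norm_eq]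
  gcongr with i
  simpa using abs_max_sub_max_le_abs (u i) (v i) 0

theorem norm_relu_sq (u : EuclideanSpace ℝ ι) : ‖relu u‖ ^ 2 = ∑ i, max (u i) 0 ^ 2 := by
  simp [EuclideanSpace.real_norm_sq_eq]

theorem norm_relu (u : EuclideanSpace ℝ ι) : ‖relu u‖ = √(∑ i, max (u i) 0 ^ 2) := by
  rw [← norm_relu_sq, Real.sqrt_sq (norm_nonneg _)]

end Euclidean

section Penalty

variable {ι : Type*} [Fintype ι] (ρ : ℝ) (z : EuclideanSpace ℝ ι)

noncomputable def penalty (w : EuclideanSpace ℝ ι) : ℝ :=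
  1 / 2 * max (‖relu (w ⊙ z)‖ - ρ) 0 ^ 2

theorem hasGradientAt_norm_relu_hadamard_sq (w : EuclideanSpace ℝ ι) :
    HasGradientAt (fun w => ‖relu (w ⊙ z)‖ ^ 2) ((2 : ℝ) • (relu (w ⊙ z) ⊙ z)) w := by
  simp_rw [norm_relu_sq, hadamard_apply, hasGradientAt_iff_hasFDerivAt]
  have hterm (i : ι) : HasFDerivAt (fun w : EuclideanSpace ℝ ι => max (w i * z i) 0 ^ 2)
      ((2 * max (w i * z i) 0) • z i • EuclideanSpace.proj i) w :=
    (hasDerivAt_max_zero_sq _).comp_hasFDerivAt w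
      ((EuclideanSpace.proj i : EuclideanSpace ℝ ι →L[ℝ] ℝ).hasFDerivAt.mul_const (z i))
  refine (HasFDerivAt.fun_sum fun i _ => hterm i).congr_fderiv ?_
  ext δ
  simp only [sum_apply, smul_apply, PiLp.proj_apply, smul_eq_mul, map_smul, toDual_apply_apply,
    PiLp.inner_apply, hadamard_apply, relu_apply, RCLike.inner_apply, Real.ringHom_apply,
    Finset.mul_sum]
  exact Finset.sum_congr rfl fun i _ => by ring

theorem penalty_le_norm_relu_hadamard_sq (hρ : 0 ≤ ρ) (w : EuclideanSpace ℝ ι) :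
    penalty ρ z w ≤ ‖relu (w ⊙ z)‖ ^ 2 := by
  have h : max (‖relu (w ⊙ z)‖ - ρ) 0 ≤ ‖relu (w ⊙ z)‖ := max_le (by linarith) (norm_nonneg _)
  calc penalty ρ z w ≤ max (‖relu (w ⊙ z)‖ - ρ) 0 ^ 2 := by
        rw [penalty]; linarith [sq_nonneg (max (‖relu (w ⊙ z)‖ - ρ) 0)]
    _ ≤ ‖relu (w ⊙ z)‖ ^ 2 := by gcongr

theorem hasGradientAt_penalty (hρ : 0 ≤ ρ) (w : EuclideanSpace ℝ ι) :
    HasGradientAt (penalty ρ z) (ballResidual ρ (relu (w ⊙ z)) ⊙ z) w := by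
  have hs := hasGradientAt_norm_relu_hadamard_sq z w
  rcases eq_or_ne (relu (w ⊙ z)) 0 with hr | hr
  · -- `0 ≤ penalty ≤ ‖relu (· ⊙ z)‖²`, and the upper bound has a critical zero at `w`
    rw [hr, show ballResidual ρ (0 : EuclideanSpace ℝ ι) = 0 by simp [ballResidual],
      zero_hadamard, hasGradientAt_iff_hasFDerivAt, map_zero]
    rw [hr, zero_hadamard, smul_zero, hasGradientAt_iff_hasFDerivAt, map_zero] at hs
    exact hasFDerivAt_zero_of_nonneg_of_le (fun u => by rw [penalty]; positivity)
      (penalty_le_norm_relu_hadamard_sq ρ z hρ) (by simp [hr]) hs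
  · have hpos : 0 < ‖relu (w ⊙ z)‖ := norm_pos_iff.mpr hr
    have hψ : HasDerivAt (fun t => 1 / 2 * max (√t - ρ) 0 ^ 2)
        (max (‖relu (w ⊙ z)‖ - ρ) 0 / (2 * ‖relu (w ⊙ z)‖)) (‖relu (w ⊙ z)‖ ^ 2) := by
      have h := ((hasDerivAt_max_zero_sq _).comp _ ((Real.hasDerivAt_sqrt
        (x := ‖relu (w ⊙ z)‖ ^ 2) (by positivity)).sub_const ρ)).const_mul (1 / 2)
      rw [Real.sqrt_sq hpos.le] at h
      exact h.congr_deriv (by field_simp)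
    convert hψ.comp_hasGradientAt (f := fun u => ‖relu (u ⊙ z)‖ ^ 2) hs using 1
    · funext u
      simp [penalty, Real.sqrt_sq (norm_nonneg _)]
    · rw [ballResidual, smul_hadamard, smul_smul]
      congr 1
      field_simp

end Penalty

theorem stmt_14_general (d : ℕ) (ρ : ℝ) (hρ : 0 ≤ ρ)
    (z : EuclideanSpace ℝ (Fin d))
    (φ : EuclideanSpace ℝ (Fin d) → ℝ)
    (hφ : ∀ w, φ w = (1 / 2) * max (Real.sqrt (∑ i, max (w i * z i) 0 ^ 2) - ρ) 0 ^ 2) :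
    ∀ x y : EuclideanSpace ℝ (Fin d),
      ‖gradient φ x - gradient φ y‖ ≤ (⨆ i, |z i|) ^ 2 * ‖x - y‖ := by
  have hφ_eq : φ = penalty ρ z := funext fun w => by rw [hφ, penalty, norm_relu]; rfl
  intro x y
  have hM : 0 ≤ ⨆ i, |z i| := Real.iSup_nonneg fun i => abs_nonneg _
  rw [hφ_eq, (hasGradientAt_penalty ρ z hρ x).gradient, (hasGradientAt_penalty ρ z hρ y).gradient,
    ← sub_hadamard]
  calc ‖(ballResidual ρ (relu (x ⊙ z)) - ballResidual ρ (relu (y ⊙ z))) ⊙ z‖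
      ≤ (⨆ i, |z i|) * ‖ballResidual ρ (relu (x ⊙ z)) - ballResidual ρ (relu (y ⊙ z))‖ :=
        norm_hadamard_le _ _
    _ ≤ (⨆ i, |z i|) * ‖relu (x ⊙ z) - relu (y ⊙ z)‖ := by
        gcongr; exact norm_ballResidual_sub_le hρ _ _
    _ ≤ (⨆ i, |z i|) * ‖x ⊙ z - y ⊙ z‖ := by gcongr; exact norm_relu_sub_relu_le _ _
    _ ≤ (⨆ i, |z i|) * ((⨆ i, |z i|) * ‖x - y‖) := by
        rw [← sub_hadamard]; gcongr; exact norm_hadamard_le _ _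
    _ = (⨆ i, |z i|) ^ 2 * ‖x - y‖ := by ring

/-- For `φ_z(w) = (1/2)(max(‖[w ⊙ z]₊‖ - ρ, 0))²`, the gradient is `‖z‖_∞²`-Lipschitz:
`‖∇φ_z(x) - ∇φ_z(y)‖ ≤ ‖z‖_∞²·‖x - y‖`. -/
theorem stmt_14 (d : ℕ) (hd : 0 < d) (ρ : ℝ) (hρ : 0 ≤ ρ)
    (z : EuclideanSpace ℝ (Fin d))
    (φ : EuclideanSpace ℝ (Fin d) → ℝ)
    (hφ : ∀ w, φ w = (1 / 2) * max (Real.sqrt (∑ i, max (w i * z i) 0 ^ 2) - ρ) 0 ^ 2) :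
    ∀ x y : EuclideanSpace ℝ (Fin d),
      ‖gradient φ x - gradient φ y‖ ≤ (⨆ i, |z i|) ^ 2 * ‖x - y‖ :=
  stmt_14_general d ρ hρ z φ hφ
end

section
/- Suppose a sequence w_1, …, w_T in ℝ^d satisfies: at each step t, w_{t+1} = w_t − η(r − ρ)e_{I_t} where I_1, …, I_T are distinct standard-basis indices, w_1 = 0, and η(r − ρ) ≤ 1/√T. Then ‖w_t‖ ≤ 1 for all t ≤ T + 1, and for any suffix average ŵ_τ = (1/(T−τ+1))Σ_{t=τ}^T w_t and any s ≤ T/2, the coordinate satisfies ŵ_τ(I_s) ≤ −η(r − ρ)/2. -/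
/-! Each step decrements a coordinate that is still zero, so after `t` steps the iterate is
`-η(r-ρ)` times a sum of `t` distinct basis vectors: its squared norm is `t (η(r-ρ))² ≤ 1`, and
coordinate `I_s` equals `-η(r-ρ)` from step `s + 1` on. For `s ≤ T/2` this holds on at least
half of every suffix window `[τ, T]`, which gives the bound on the suffix average. -/

open Finset

theorem mul_sq_le_one_of_le_one_div_sqrt {c x : ℝ} (hc : 0 ≤ c) (hx : 0 ≤ x)
    (hcx : c ≤ 1 / √x) : x * c ^ 2 ≤ 1 :=
  calc x * c ^ 2 ≤ x * (1 / √x) ^ 2 := by gcongr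
    _ = x * x⁻¹ := by rw [div_pow, one_pow, Real.sq_sqrt hx, one_div]
    _ ≤ 1 := mul_inv_le_one

theorem two_mul_card_filter_lt_ge {s τ T : ℕ} (hτ : 1 ≤ τ) (hτT : τ ≤ T) (hsT : 2 * s ≤ T) :
    T + 1 - τ ≤ 2 * #{t ∈ Icc τ T | s < t} := by
  have hfilter : {t ∈ Icc τ T | s < t} = Icc (max (s + 1) τ) T := by
    ext t
    simp only [mem_filter, mem_Icc]
    omega
  rw [hfilter, Nat.card_Icc, max_def]
  split_ifs <;> omega

namespace BasisDescent

variable {ι : Type*} [DecidableEq ι] {T : ℕ} {c : ℝ} {I : ℕ → ι}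
  {w : ℕ → EuclideanSpace ℝ ι}

theorem apply_eq (hI : Set.InjOn I (Set.Icc 1 T)) (hw1 : w 1 = 0)
    (hupd : ∀ t, 1 ≤ t → t ≤ T → w (t + 1) = w t - c • EuclideanSpace.single (I t) 1)
    {s : ℕ} (hs : s ∈ Set.Icc 1 T) {t : ℕ} (ht : 1 ≤ t) (htT : t ≤ T + 1) :
    w t (I s) = if s < t then -c else 0 := by
  induction t, ht using Nat.le_induction with
  | base => simp [hw1, show ¬s < 1 by grind]
  | succ t ht ih =>
    have htT' : t ≤ T := by omega
    rw [hupd t ht htT', PiLp.sub_apply, PiLp.smul_apply, PiLp.single_apply,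
      ih (by omega), smul_eq_mul]
    by_cases hst : s = t
    · simp [hst]
    · have hne : I s ≠ I t := fun h => hst (hI hs ⟨ht, htT'⟩ h)
      simp only [hne, if_false, mul_zero, sub_zero]
      exact if_congr (by omega) rfl rfl

theorem suffix_average_apply_le (hI : Set.InjOn I (Set.Icc 1 T)) (hw1 : w 1 = 0)
    (hupd : ∀ t, 1 ≤ t → t ≤ T → w (t + 1) = w t - c • EuclideanSpace.single (I t) 1)
    (hc : 0 ≤ c) {τ s : ℕ} (hτ : 1 ≤ τ) (hτT : τ ≤ T) (hs : 1 ≤ s) (hsT : 2 * s ≤ T) :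
    ((T : ℝ) - τ + 1)⁻¹ * ∑ t ∈ Icc τ T, w t (I s) ≤ -c / 2 := by
  have hsum : ∑ t ∈ Icc τ T, w t (I s) = #{t ∈ Icc τ T | s < t} * -c := by
    rw [← nsmul_eq_mul, ← sum_const, sum_filter]
    refine sum_congr rfl fun t ht => ?_
    rw [mem_Icc] at ht
    exact apply_eq hI hw1 hupd ⟨hs, by omega⟩ (by omega) (by omega)
  have hcount : (T : ℝ) - τ + 1 ≤ 2 * #{t ∈ Icc τ T | s < t} := by
    have hwindow_cast : ((T + 1 - τ : ℕ) : ℝ) = T - τ + 1 := by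
      rw [Nat.cast_sub (by omega)]
      push_cast
      ring
    rw [← hwindow_cast]
    exact_mod_cast two_mul_card_filter_lt_ge hτ hτT hsT
  have hwindow : (0 : ℝ) < T - τ + 1 := by
    have : (τ : ℝ) ≤ T := by exact_mod_cast hτT
    linarith
  rw [hsum, inv_mul_le_iff₀ hwindow]
  nlinarith

variable [Fintype ι]

theorem norm_sq_eq (hI : Set.InjOn I (Set.Icc 1 T)) (hw1 : w 1 = 0)
    (hupd : ∀ t, 1 ≤ t → t ≤ T → w (t + 1) = w t - c • EuclideanSpace.single (I t) 1)
    {t : ℕ} (htT : t ≤ T) : ‖w (t + 1)‖ ^ 2 = t * c ^ 2 := by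
  induction t with
  | zero => simp [hw1]
  | succ t ih =>
    have hfresh : w (t + 1) (I (t + 1)) = 0 := by
      rw [apply_eq hI hw1 hupd ⟨by omega, htT⟩ (by omega) (by omega), if_neg (by omega)]
    -- the step is orthogonal to the current iterate, so the squared norms add up
    rw [hupd (t + 1) (by omega) htT, norm_sub_sq_real, real_inner_smul_right,
      EuclideanSpace.inner_single_right, hfresh, norm_smul, PiLp.norm_single,
      ih (by omega), map_zero, norm_one, mul_one, Real.norm_eq_abs, sq_abs]
    push_cast
    ring

theorem norm_le_one (hI : Set.InjOn I (Set.Icc 1 T)) (hw1 : w 1 = 0)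
    (hupd : ∀ t, 1 ≤ t → t ≤ T → w (t + 1) = w t - c • EuclideanSpace.single (I t) 1)
    (hc : 0 ≤ c) (hstep : c ≤ 1 / √T) {t : ℕ} (ht : 1 ≤ t) (htT : t ≤ T + 1) :
    ‖w t‖ ≤ 1 := by
  obtain ⟨t, rfl⟩ := Nat.exists_eq_add_of_le' ht
  have hsq : ‖w (t + 1)‖ ^ 2 ≤ 1 :=
    calc ‖w (t + 1)‖ ^ 2 = t * c ^ 2 := norm_sq_eq hI hw1 hupd (by omega)
      _ ≤ T * c ^ 2 := by gcongr; exact_mod_cast (by omega : t ≤ T)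
      _ ≤ 1 := mul_sq_le_one_of_le_one_div_sqrt hc T.cast_nonneg hstep
  exact (sq_le_one_iff₀ (norm_nonneg _)).mp hsq

end BasisDescent

theorem stmt_19_general (d T : ℕ) (η r ρ : ℝ) (hη : 0 < η) (hrρ : ρ < r)
    (hstep : η * (r - ρ) ≤ 1 / Real.sqrt T)
    (I : ℕ → Fin d)
    (hI : ∀ s t : ℕ, 1 ≤ s → s ≤ T → 1 ≤ t → t ≤ T → s ≠ t → I s ≠ I t)
    (w : ℕ → EuclideanSpace ℝ (Fin d)) (hw1 : w 1 = 0)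
    (hupd : ∀ t, 1 ≤ t → t ≤ T →
      w (t + 1) = w t - (η * (r - ρ)) • EuclideanSpace.single (I t) 1) :
    (∀ t, 1 ≤ t → t ≤ T + 1 → ‖w t‖ ≤ 1) ∧
      (∀ τ s : ℕ, 1 ≤ τ → τ ≤ T → 1 ≤ s → (s : ℝ) ≤ (T : ℝ) / 2 →
        ((T : ℝ) - τ + 1)⁻¹ * ∑ t ∈ Finset.Icc τ T, w t (I s)
          ≤ -(η * (r - ρ)) / 2) := by
  have hc : 0 ≤ η * (r - ρ) := (mul_pos hη (sub_pos.2 hrρ)).le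
  have hinj : Set.InjOn I (Set.Icc 1 T) := fun s hs t ht hst =>
    by_contra fun hne => hI s t hs.1 hs.2 ht.1 ht.2 hne hst
  refine ⟨fun t ht htT => BasisDescent.norm_le_one hinj hw1 hupd hc hstep ht htT,
    fun τ s hτ hτT hs hsT => ?_⟩
  have hsT' : 2 * s ≤ T := by exact_mod_cast (by linarith : (2 * s : ℝ) ≤ T)
  exact BasisDescent.suffix_average_apply_le hinj hw1 hupd hc hτ hτT hs hsT'

/-- If `w₁ = 0` and at each step `t = 1,…,T` the iterate moves by `-η(r-ρ)` along a fresh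
standard-basis direction `e_{I_t}` (the `I_t` pairwise distinct), with `η(r-ρ) ≤ 1/√T`,
then all iterates stay in the unit ball, and every suffix average `ŵ_τ` satisfies
`ŵ_τ(I_s) ≤ -η(r-ρ)/2` for every `s ≤ T/2`. -/
theorem stmt_19 (d T : ℕ) (hT : 1 ≤ T) (η r ρ : ℝ) (hη : 0 < η) (hρ : 0 ≤ ρ) (hrρ : ρ < r)
    (hstep : η * (r - ρ) ≤ 1 / Real.sqrt T)
    (I : ℕ → Fin d)
    (hI : ∀ s t : ℕ, 1 ≤ s → s ≤ T → 1 ≤ t → t ≤ T → s ≠ t → I s ≠ I t)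
    (w : ℕ → EuclideanSpace ℝ (Fin d)) (hw1 : w 1 = 0)
    (hupd : ∀ t, 1 ≤ t → t ≤ T →
      w (t + 1) = w t - (η * (r - ρ)) • EuclideanSpace.single (I t) 1) :
    (∀ t, 1 ≤ t → t ≤ T + 1 → ‖w t‖ ≤ 1) ∧
      (∀ τ s : ℕ, 1 ≤ τ → τ ≤ T → 1 ≤ s → (s : ℝ) ≤ (T : ℝ) / 2 →
        ((T : ℝ) - τ + 1)⁻¹ * ∑ t ∈ Finset.Icc τ T, w t (I s)
          ≤ -(η * (r - ρ)) / 2) :=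
  stmt_19_general d T η r ρ hη hrρ hstep I hI w hw1 hupd
end
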